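/- Let T be a symmetric 3-tensor on R^d and g in R^d a fixed vector, with u ~ N(0, I_d). Then E[(u^T g)(Σ_{i,j,k} T_{ijk} u_i u_j u_k) ||u||^2] = 3(d+4) Σ_k g_k (Σ_i T_{iik}). -/

import Mathlib

open MeasureTheory ProbabilityTheory

/-- The standard Gaussian measure on `ℝ^d`, with i.i.d. `N(0,1)` coordinates. -/
noncomputable def stdGaussian (d : ℕ) : Measure (Fin d → ℝ) :=
  Measure.pi fun _ => gaussianReal 0 1

/-!
Everything reduces to Gaussian integration by parts on monomials,
`E[u_l · ∏_{i ∈ s} u_i] = (count of l in s) · E[∏_{i ∈ s - {l}} u_i]`, which follows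
coordinatewise from Stein's identity `E[x^(n+1)] = n E[x^(n-1)]` for `x ~ N(0,1)`.
Applied to `u_n² · u^s` and summed over `n`, it shows that multiplying a monomial of degree `r`
by `‖u‖²` multiplies its expectation by `d + r`; applied twice more it gives Isserlis' formula
`E[u_a u_b u_c u_e] = δ_ab δ_ce + δ_ac δ_be + δ_ae δ_bc`. The integrand is a combination of
degree-4 monomials times `‖u‖²`, so its expectation is `(d + 4)` times the contraction of
`g ⊗ T` with the Isserlis tensor, and each of the three pairings contributes `Σ_k g_k Σ_i T_iik`
by symmetry of `T`.
-/

lemma integrable_pow_gaussianReal (n : ℕ) : Integrable (fun x : ℝ => x ^ n) (gaussianReal 0 1) :=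
  (integrable_norm_iff (by fun_prop)).1 <| by
    simpa [norm_pow] using (memLp_id_gaussianReal (μ := 0) (v := 1) n).integrable_norm_pow'

lemma integrable_pow_mul_gaussianPDFReal (n : ℕ) :
    Integrable (fun x : ℝ => x ^ n * gaussianPDFReal 0 1 x) := by
  have h := integrable_pow_gaussianReal n
  rw [gaussianReal_of_var_ne_zero 0 one_ne_zero, integrable_withDensity_iff_integrable_smul'
    (measurable_gaussianPDF 0 1) (.of_forall fun _ => gaussianPDF_lt_top)] at h
  simpa [toReal_gaussianPDF, mul_comm] using h

lemma hasDerivAt_gaussianPDFReal (x : ℝ) :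
    HasDerivAt (gaussianPDFReal 0 1) (-(x * gaussianPDFReal 0 1 x)) x := by
  have hφ : gaussianPDFReal 0 1 = fun y => (√(2 * Real.pi))⁻¹ * Real.exp (-y ^ 2 / 2) := by
    funext y; simp [gaussianPDFReal]
  have hexponent : HasDerivAt (fun y : ℝ => -y ^ 2 / 2) (-x) x :=
    ((hasDerivAt_pow 2 x).neg.div_const 2).congr_deriv (by ring)
  rw [hφ]
  exact (hexponent.exp.const_mul _).congr_deriv (by ring)

/-- At `n = 0` the truncated `n - 1` is harmless: the factor `n` vanishes. -/
lemma integral_pow_succ_gaussianReal (n : ℕ) :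
    ∫ x, x ^ (n + 1) ∂gaussianReal 0 1 = n * ∫ x, x ^ (n - 1) ∂gaussianReal 0 1 := by
  have ibp := integral_mul_deriv_eq_deriv_mul_of_integrable (u := fun x : ℝ => x ^ n)
    (v := gaussianPDFReal 0 1) (u' := fun x => n * x ^ (n - 1))
    (v' := fun x => -(x * gaussianPDFReal 0 1 x))
    (fun x _ => hasDerivAt_pow n x) (fun x _ => hasDerivAt_gaussianPDFReal x)
    (by simpa [Pi.mul_def, pow_succ, mul_assoc] using
      (integrable_pow_mul_gaussianPDFReal (n + 1)).neg)
    (by simpa [Pi.mul_def, mul_assoc] using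
      (integrable_pow_mul_gaussianPDFReal (n - 1)).const_mul (n : ℝ))
    (integrable_pow_mul_gaussianPDFReal n)
  simp only [integral_gaussianReal_eq_integral_smul one_ne_zero, smul_eq_mul, mul_neg,
    integral_neg, neg_inj] at ibp ⊢
  rw [← integral_const_mul]
  convert ibp using 1 <;> congr 1 <;> funext x <;> ring

theorem Multiset.prod_map_eq_prod_pow_count {ι M : Type*} [Fintype ι] [DecidableEq ι]
    [CommMonoid M] (s : Multiset ι) (f : ι → M) : (s.map f).prod = ∏ i, f i ^ s.count i := by
  rw [Finset.prod_multiset_map_count]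
  exact Finset.prod_subset (Finset.subset_univ _) fun i _ hi => by
    rw [Multiset.count_eq_zero_of_notMem (by simpa using hi), pow_zero]

section Moments

variable {d : ℕ}

instance isProbabilityMeasure_stdGaussian : IsProbabilityMeasure (stdGaussian d) :=
  inferInstanceAs (IsProbabilityMeasure (Measure.pi fun _ : Fin d => gaussianReal 0 1))

lemma integrable_prod_map_stdGaussian (s : Multiset (Fin d)) :
    Integrable (fun u => (s.map u).prod) (stdGaussian d) := by
  simp_rw [Multiset.prod_map_eq_prod_pow_count]
  exact Integrable.fintype_prod fun i => integrable_pow_gaussianReal _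

lemma integral_prod_map_stdGaussian (s : Multiset (Fin d)) :
    ∫ u, (s.map u).prod ∂stdGaussian d = ∏ i, ∫ x, x ^ s.count i ∂gaussianReal 0 1 := by
  simp_rw [Multiset.prod_map_eq_prod_pow_count]
  exact integral_fintype_prod_eq_prod (fun i x => x ^ s.count i)

lemma integral_prod_map_cons_stdGaussian (l : Fin d) (s : Multiset (Fin d)) :
    ∫ u, ((l ::ₘ s).map u).prod ∂stdGaussian d
      = s.count l * ∫ u, ((s.erase l).map u).prod ∂stdGaussian d := by
  simp only [integral_prod_map_stdGaussian, Fintype.prod_eq_mul_prod_compl l,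
    Multiset.count_cons_self, Multiset.count_erase_self, integral_pow_succ_gaussianReal, mul_assoc]
  congr 2
  refine Finset.prod_congr rfl fun i hi => ?_
  have hil : i ≠ l := by simpa using hi
  rw [Multiset.count_cons_of_ne hil, Multiset.count_erase_of_ne hil]

lemma prod_map_mul_sum_sq (s : Multiset (Fin d)) (u : Fin d → ℝ) :
    (s.map u).prod * ∑ n, u n ^ 2 = ∑ n, ((n ::ₘ n ::ₘ s).map u).prod := by
  simp only [Finset.mul_sum, Multiset.map_cons, Multiset.prod_cons]
  exact Finset.sum_congr rfl fun n _ => by ring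

lemma integrable_prod_map_mul_sum_sq_stdGaussian (s : Multiset (Fin d)) :
    Integrable (fun u => (s.map u).prod * ∑ n, u n ^ 2) (stdGaussian d) := by
  simp_rw [prod_map_mul_sum_sq]
  exact integrable_finsetSum _ fun n _ => integrable_prod_map_stdGaussian _

lemma integral_prod_map_mul_sum_sq_stdGaussian (s : Multiset (Fin d)) :
    ∫ u, (s.map u).prod * ∑ n, u n ^ 2 ∂stdGaussian d
      = (d + Multiset.card s) * ∫ u, (s.map u).prod ∂stdGaussian d := by
  simp_rw [prod_map_mul_sum_sq]
  rw [integral_finsetSum _ fun n _ => integrable_prod_map_stdGaussian _]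
  simp only [integral_prod_map_cons_stdGaussian, Multiset.count_cons_self,
    Multiset.erase_cons_head, ← Finset.sum_mul]
  push_cast
  rw [Finset.sum_add_distrib, ← Nat.cast_sum, Multiset.sum_count_eq_card (by simp)]
  simp [add_comm]

lemma integral_mul_stdGaussian (i j : Fin d) :
    ∫ u, u i * u j ∂stdGaussian d = if i = j then 1 else 0 := by
  have hprod : ∀ u : Fin d → ℝ, u i * u j = ((i ::ₘ {j}).map u).prod := fun u => by simp
  simp_rw [hprod, integral_prod_map_cons_stdGaussian]
  rcases eq_or_ne i j with rfl | hij <;> simp [*]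

lemma integral_mul_mul_mul_stdGaussian (a b c e : Fin d) :
    ∫ u, u a * u b * u c * u e ∂stdGaussian d
      = (if a = b then 1 else 0) * (if c = e then 1 else 0)
        + (if a = c then 1 else 0) * (if b = e then 1 else 0)
        + (if a = e then 1 else 0) * (if b = c then 1 else 0) := by
  have hprod : ∀ u : Fin d → ℝ, u a * u b * u c * u e = ((a ::ₘ b ::ₘ c ::ₘ {e}).map u).prod :=
    fun u => by simp [mul_assoc]
  simp_rw [hprod, integral_prod_map_cons_stdGaussian]
  rcases eq_or_ne a b with rfl | hab <;> rcases eq_or_ne a c with rfl | hac <;>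
    rcases eq_or_ne a e with rfl | hae <;>
    simp_all [eq_comm (a := a), Multiset.erase_cons_tail, integral_mul_stdGaussian,
      one_add_one_eq_two, two_add_one_eq_three]

end Moments

lemma sum_mul_isserlis_of_symm {d : ℕ} (T : Fin d → Fin d → Fin d → ℝ) (g : Fin d → ℝ)
    (hsymm : ∀ i j k : Fin d, T i j k = T j i k ∧ T i j k = T i k j) :
    ∑ i, ∑ j, ∑ k, ∑ l, g l * T i j k *
        ((if l = i then 1 else 0) * (if j = k then 1 else 0)
          + (if l = j then 1 else 0) * (if i = k then 1 else 0)
          + (if l = k then 1 else 0) * (if i = j then 1 else 0))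
      = 3 * ∑ k, g k * ∑ i, T i i k := by
  simp only [mul_add, mul_ite, mul_one, mul_zero, Finset.sum_add_distrib, Finset.sum_ite_eq,
    Finset.sum_ite_eq', Finset.mem_univ, if_true, Finset.sum_ite_irrel, Finset.sum_const_zero]
  have hswap₁ : ∀ x y, T x y y = T y y x := fun x y => (hsymm x y y).1.trans (hsymm y x y).2
  have hswap₂ : ∀ x y, T x y x = T x x y := fun x y => (hsymm x y x).2
  have hfirst : ∑ x, ∑ y, g x * T x y y = ∑ x, ∑ y, g x * T y y x :=
    Finset.sum_congr rfl fun x _ => Finset.sum_congr rfl fun y _ => by rw [hswap₁]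
  simp only [hswap₂, hfirst]
  rw [Finset.sum_comm (f := fun x y => g y * T x x y)]
  simp only [← Finset.mul_sum]
  ring

theorem gaussian_cross_moment (d : ℕ) (T : Fin d → Fin d → Fin d → ℝ) (g : Fin d → ℝ)
    (hsymm : ∀ i j k : Fin d, T i j k = T j i k ∧ T i j k = T i k j) :
    ∫ u, (∑ i, u i * g i) * (∑ i, ∑ j, ∑ k, T i j k * u i * u j * u k)
          * (∑ n, (u n) ^ 2) ∂(stdGaussian d)
      = 3 * (d + 4 : ℝ) * ∑ k, g k * (∑ i, T i i k) := by
  have hexpand : ∀ u : Fin d → ℝ,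
      (∑ i, u i * g i) * (∑ i, ∑ j, ∑ k, T i j k * u i * u j * u k) * ∑ n, u n ^ 2
        = ∑ i, ∑ j, ∑ k, ∑ l,
            g l * T i j k * (((l ::ₘ i ::ₘ j ::ₘ {k}).map u).prod * ∑ n, u n ^ 2) := by
    intro u
    generalize ∑ n, u n ^ 2 = r
    simp only [Finset.sum_mul, Finset.mul_sum, Multiset.map_cons, Multiset.prod_cons,
      Multiset.map_singleton, Multiset.prod_singleton]
    refine Finset.sum_congr rfl fun i _ => Finset.sum_congr rfl fun j _ =>
      Finset.sum_congr rfl fun k _ => Finset.sum_congr rfl fun l _ => ?_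
    ring
  have hint := integrable_prod_map_mul_sum_sq_stdGaussian (d := d)
  simp_rw [hexpand]
  simp (disch := (intros; fun_prop)) only [integral_finsetSum, integral_const_mul,
    integral_prod_map_mul_sum_sq_stdGaussian]
  simp only [Multiset.map_cons, Multiset.prod_cons, Multiset.map_singleton,
    Multiset.prod_singleton, ← mul_assoc, integral_mul_mul_mul_stdGaussian, Multiset.card_cons,
    Multiset.card_singleton]
  simp only [mul_right_comm (g _ * T _ _ _) ((d : ℝ) + _), ← Finset.sum_mul,
    sum_mul_isserlis_of_symm T g hsymm]
  push_cast
  ring
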